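/- A nontrivial NM-chain satisfies the identity n((n(x*x))*(n(x*x))) = (n((n(x))*(n(x))))*(n((n(x))*(n(x)))) for all x if and only if it has no negation fixpoint. -/
import Mathlib


class NMChain (α : Type*) extends LinearOrder α, BoundedOrder α where
  mul : α → α → α
  imp : α → α → α
  mul_comm : ∀ x y : α, mul x y = mul y x
  mul_assoc : ∀ x y z : α, mul (mul x y) z = mul x (mul y z)
  mul_top : ∀ x : α, mul x ⊤ = x
  residuation : ∀ x y z : α, mul z x ≤ y ↔ z ≤ imp x y
  involution : ∀ x : α, imp (imp x ⊥) ⊥ = x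
  wnm : ∀ x y : α, max (imp (mul x y) ⊥) (imp (min x y) (mul x y)) = ⊤

def NMChain.neg {α : Type*} [NMChain α] (x : α) : α := NMChain.imp x ⊥

namespace NMChain

variable {α : Type*} [NMChain α]

theorem top_mul' (x : α) : mul ⊤ x = x := by rw [mul_comm]; exact mul_top x

theorem mul_mono_left {x y : α} (h : x ≤ y) (z : α) : mul x z ≤ mul y z := by
  have h1 : y ≤ imp z (mul y z) := (residuation z (mul y z) y).mp le_rfl
  exact (residuation z (mul y z) x).mpr (le_trans h h1)

theorem mul_le_left (x y : α) : mul x y ≤ x := by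
  calc mul x y = mul y x := mul_comm x y
    _ ≤ mul ⊤ x := mul_mono_left le_top x
    _ = x := top_mul' x

theorem mul_le_right (x y : α) : mul x y ≤ y := by
  rw [mul_comm]; exact mul_le_left y x

theorem imp_eq_top_iff {x y : α} : imp x y = ⊤ ↔ x ≤ y := by
  constructor
  · intro hle
    have := (residuation x y ⊤).mpr (hle ▸ le_rfl)
    simpa [top_mul'] using this
  · intro hle
    refine le_antisymm le_top ((residuation x y ⊤).mp ?_)
    simpa [top_mul'] using hle

theorem mul_eq_bot_iff {x y : α} : mul x y = ⊥ ↔ x ≤ neg y := by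
  show _ ↔ x ≤ imp y ⊥
  constructor
  · intro hb; exact (residuation y ⊥ x).mp (le_of_eq hb)
  · intro hle; exact le_antisymm ((residuation y ⊥ x).mpr hle) bot_le

theorem mul_cases (x y : α) : mul x y = ⊥ ∨ mul x y = min x y := by
  have hw := wnm x y
  rcases max_eq_top.mp hw with h1 | h1
  · left
    exact le_antisymm (imp_eq_top_iff.mp h1) bot_le
  · right
    exact le_antisymm (le_min (mul_le_left x y) (mul_le_right x y))
      (imp_eq_top_iff.mp h1)

theorem neg_neg' (x : α) : neg (neg x) = x := involution x

theorem neg_top' : (neg ⊤ : α) = ⊥ := by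
  have h1 : mul (imp (⊤ : α) ⊥) ⊤ ≤ ⊥ := (residuation ⊤ ⊥ _).mpr le_rfl
  rw [mul_top] at h1
  exact le_antisymm h1 bot_le

theorem neg_bot' : (neg ⊥ : α) = ⊤ := by
  have h1 := neg_neg' (⊤ : α)
  rw [neg_top'] at h1
  exact h1

theorem sq_bot {x : α} (h : x ≤ neg x) : mul x x = ⊥ := mul_eq_bot_iff.mpr h

theorem sq_of_not_le {x : α} (h : ¬ x ≤ neg x) : mul x x = x := by
  rcases mul_cases x x with h1 | h1
  · exact absurd (mul_eq_bot_iff.mp h1) h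
  · simpa using h1

end NMChain

theorem nm_chain_BP_iff_no_fixpoint {α : Type*} [NMChain α] (h : (⊥ : α) ≠ ⊤) :
    (∀ x : α,
      NMChain.neg (NMChain.mul (NMChain.neg (NMChain.mul x x)) (NMChain.neg (NMChain.mul x x)))
        = NMChain.mul (NMChain.neg (NMChain.mul (NMChain.neg x) (NMChain.neg x)))
            (NMChain.neg (NMChain.mul (NMChain.neg x) (NMChain.neg x))))
    ↔ ¬ ∃ f : α, NMChain.neg f = f := by
  have htt : NMChain.mul (⊤ : α) ⊤ = ⊤ := by
    apply NMChain.sq_of_not_le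
    rw [NMChain.neg_top']
    intro hle
    exact h (le_antisymm bot_le hle)
  constructor
  · intro hid
    rintro ⟨f, hf⟩
    have hff : NMChain.mul f f = ⊥ := NMChain.sq_bot (le_of_eq hf.symm)
    have h1 := hid f
    rw [hf, hff, NMChain.neg_bot', htt, NMChain.neg_top'] at h1
    exact h h1
  · intro hnf x
    rcases lt_trichotomy x (NMChain.neg x) with hlt | heq | hgt
    · have hxx : NMChain.mul x x = ⊥ := NMChain.sq_bot hlt.le
      have hnn : NMChain.mul (NMChain.neg x) (NMChain.neg x) = NMChain.neg x := by
        apply NMChain.sq_of_not_le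
        rw [NMChain.neg_neg']
        intro hle
        exact absurd (hle.trans_lt hlt) (lt_irrefl _)
      rw [hxx, NMChain.neg_bot', htt, NMChain.neg_top', hnn, NMChain.neg_neg', hxx]
    · exact absurd ⟨x, heq.symm⟩ hnf
    · have hxx : NMChain.mul x x = x :=
        NMChain.sq_of_not_le (fun hle => absurd (hgt.trans_le hle) (lt_irrefl _))
      have hnn : NMChain.mul (NMChain.neg x) (NMChain.neg x) = ⊥ := by
        apply NMChain.sq_bot
        rw [NMChain.neg_neg']
        exact hgt.le
      rw [hxx, hnn, NMChain.neg_bot', htt]
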